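/- One-step cost-difference identity: for any two stable gains θ and θ′, writing Δ := θ − θ′, the Lyapunov solutions satisfy M(θ) − M(θ′) = Δᵀ E_{θ′} + E_{θ′}ᵀ Δ + Δᵀ ( R + γ Bᵀ M(θ′) B ) Δ + γ C_θᵀ ( M(θ) − M(θ′) ) C_θ. -/

import Mathlib

/-!
Shifting the defining series by one step shows that `M(θ)` solves the discounted Lyapunov
equation `M = Q + θᵀ R θ + γ C_θᵀ M C_θ`, and `M(θ′)` is symmetric because `Q` and `R` are.
Subtracting the equation for `θ′` from the one for `θ` and writing `C_θ = A - B θ′ - B Δ`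
turns the claim into a polynomial identity in noncommuting matrices.
-/

open Matrix
open scoped Matrix.Norms.L2Operator

noncomputable section

/-- The closed-loop matrix `C_θ = A - B θ`. -/
def Cl {dx du : ℕ} (A : Matrix (Fin dx) (Fin dx) ℝ) (B : Matrix (Fin dx) (Fin du) ℝ)
    (θ : Matrix (Fin du) (Fin dx) ℝ) : Matrix (Fin dx) (Fin dx) ℝ :=
  A - B * θ

/-- A closed-loop matrix `C` is stable (for discount factor `γ`) if
`‖C^t‖ ≤ c rᵗ γ^{-t/2}` (L2 operator norm) for some `c > 0` and `r ∈ (0,1)`. -/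
def IsStable (γ : ℝ) {dx : ℕ} (C : Matrix (Fin dx) (Fin dx) ℝ) : Prop :=
  ∃ c > (0:ℝ), ∃ r ∈ Set.Ioo (0:ℝ) 1, ∀ t : ℕ, ‖C ^ t‖ ≤ c * r ^ t * γ ^ (-(t : ℝ) / 2)

/-- `M(θ) := ∑_{t=0}^∞ γᵗ (C_θᵀ)ᵗ (Q + θᵀ R θ) C_θᵗ`. -/
def Mmat {dx du : ℕ} (γ : ℝ) (A : Matrix (Fin dx) (Fin dx) ℝ) (B : Matrix (Fin dx) (Fin du) ℝ)
    (Q : Matrix (Fin dx) (Fin dx) ℝ) (R : Matrix (Fin du) (Fin du) ℝ)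
    (θ : Matrix (Fin du) (Fin dx) ℝ) : Matrix (Fin dx) (Fin dx) ℝ :=
  ∑' t : ℕ, γ ^ t • ((Cl A B θ)ᵀ ^ t * (Q + θᵀ * R * θ) * Cl A B θ ^ t)

/-- `Σ_θ := (1-γ) ∑_{t=0}^∞ γᵗ C_θᵗ Σ₁ (C_θᵀ)ᵗ`. -/
def SigMat {dx du : ℕ} (γ : ℝ) (A : Matrix (Fin dx) (Fin dx) ℝ) (B : Matrix (Fin dx) (Fin du) ℝ)
    (S1 : Matrix (Fin dx) (Fin dx) ℝ) (θ : Matrix (Fin du) (Fin dx) ℝ) :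
    Matrix (Fin dx) (Fin dx) ℝ :=
  (1 - γ) • ∑' t : ℕ, γ ^ t • (Cl A B θ ^ t * S1 * (Cl A B θ)ᵀ ^ t)

/-- `E_θ := (R + γ Bᵀ M(θ) B) θ - γ Bᵀ M(θ) A`. -/
def Emat {dx du : ℕ} (γ : ℝ) (A : Matrix (Fin dx) (Fin dx) ℝ) (B : Matrix (Fin dx) (Fin du) ℝ)
    (Q : Matrix (Fin dx) (Fin dx) ℝ) (R : Matrix (Fin du) (Fin du) ℝ)
    (θ : Matrix (Fin du) (Fin dx) ℝ) : Matrix (Fin du) (Fin dx) ℝ :=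
  (R + γ • (Bᵀ * Mmat γ A B Q R θ * B)) * θ - γ • (Bᵀ * Mmat γ A B Q R θ * A)

/-- `J(θ) := (1-γ) tr(M(θ) Σ₁)`. -/
def Jcost {dx du : ℕ} (γ : ℝ) (A : Matrix (Fin dx) (Fin dx) ℝ) (B : Matrix (Fin dx) (Fin du) ℝ)
    (Q : Matrix (Fin dx) (Fin dx) ℝ) (R : Matrix (Fin du) (Fin du) ℝ)
    (S1 : Matrix (Fin dx) (Fin dx) ℝ) (θ : Matrix (Fin du) (Fin dx) ℝ) : ℝ :=
  (1 - γ) * (Mmat γ A B Q R θ * S1).trace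

/-- The smallest singular value of a square matrix, as the infimum of `‖Ax‖` over unit vectors. -/
def sigmaMin {m : Type*} [Fintype m] [DecidableEq m] (A : Matrix m m ℝ) : ℝ :=
  ⨅ x : {x : EuclideanSpace ℝ m // ‖x‖ = 1}, ‖Matrix.toEuclideanLin A x.1‖

/-- The Frobenius norm of a matrix. -/
def frobNorm {m n : Type*} [Fintype m] [Fintype n] (A : Matrix m n ℝ) : ℝ :=
  Real.sqrt (∑ i, ∑ j, A i j ^ 2)

namespace Matrix

variable {m : Type*} [Fintype m] [DecidableEq m]

theorem l2_opNorm_transpose {n : Type*} [Fintype n] [DecidableEq n] (X : Matrix m n ℝ) :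
    ‖Xᵀ‖ = ‖X‖ := by
  rw [← conjTranspose_eq_transpose_of_trivial, l2_opNorm_conjTranspose]

def lyapunovSum (γ : ℝ) (C S : Matrix m m ℝ) : Matrix m m ℝ :=
  ∑' t : ℕ, γ ^ t • (Cᵀ ^ t * S * C ^ t)

theorem transpose_lyapunovSum (γ : ℝ) (C S : Matrix m m ℝ) :
    (lyapunovSum γ C S)ᵀ = lyapunovSum γ C Sᵀ := by
  simp only [lyapunovSum, transpose_tsum, transpose_smul, transpose_mul, transpose_pow,
    transpose_transpose, Matrix.mul_assoc]

theorem lyapunovSum_eq_add {γ : ℝ} {C S : Matrix m m ℝ}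
    (hsum : Summable fun t : ℕ => γ ^ t • (Cᵀ ^ t * S * C ^ t)) :
    lyapunovSum γ C S = S + γ • (Cᵀ * lyapunovSum γ C S * C) := by
  have hshift : ∀ t : ℕ, γ ^ (t + 1) • (Cᵀ ^ (t + 1) * S * C ^ (t + 1))
      = γ • (Cᵀ * (γ ^ t • (Cᵀ ^ t * S * C ^ t)) * C) := by
    intro t
    rw [Matrix.mul_smul, Matrix.smul_mul, smul_smul, ← pow_succ', pow_succ' Cᵀ, pow_succ C]
    simp only [Matrix.mul_assoc]
  calc lyapunovSum γ C S = S + ∑' t : ℕ, γ • (Cᵀ * (γ ^ t • (Cᵀ ^ t * S * C ^ t)) * C) := by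
        rw [lyapunovSum, hsum.tsum_eq_zero_add]
        simp only [pow_zero, one_smul, Matrix.one_mul, Matrix.mul_one, hshift]
    _ = S + γ • (Cᵀ * lyapunovSum γ C S * C) := by
        rw [tsum_const_smul'', (hsum.mul_left Cᵀ).tsum_mul_right, hsum.tsum_mul_left, lyapunovSum]

end Matrix

theorem IsStable.summable_lyapunov {dx : ℕ} {γ : ℝ} (hγ : 0 < γ)
    {C : Matrix (Fin dx) (Fin dx) ℝ} (hC : IsStable γ C) (S : Matrix (Fin dx) (Fin dx) ℝ) :
    Summable fun t : ℕ => γ ^ t • (Cᵀ ^ t * S * C ^ t) := by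
  obtain ⟨c, -, r, hr, hbound⟩ := hC
  have hdecay : ∀ t : ℕ, γ ^ t * ‖C ^ t‖ ^ 2 ≤ c ^ 2 * (r ^ 2) ^ t := by
    intro t
    have hγt : γ ^ t * (γ ^ (-(t : ℝ) / 2)) ^ 2 = 1 := by
      rw [← Real.rpow_natCast γ t, ← Real.rpow_two, ← Real.rpow_mul hγ.le,
        ← Real.rpow_add hγ]
      norm_num
    calc γ ^ t * ‖C ^ t‖ ^ 2 ≤ γ ^ t * (c * r ^ t * γ ^ (-(t : ℝ) / 2)) ^ 2 := by
          gcongr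
          exact hbound t
      _ = c ^ 2 * (r ^ 2) ^ t * (γ ^ t * (γ ^ (-(t : ℝ) / 2)) ^ 2) := by ring
      _ = c ^ 2 * (r ^ 2) ^ t := by rw [hγt, mul_one]
  have hr2 : r ^ 2 < 1 := by nlinarith [hr.1, hr.2]
  refine Summable.of_norm_bounded (g := fun t => ‖S‖ * c ^ 2 * (r ^ 2) ^ t)
    ((summable_geometric_of_lt_one (by positivity) hr2).mul_left _) fun t => ?_
  calc ‖γ ^ t • (Cᵀ ^ t * S * C ^ t)‖ ≤ γ ^ t * (‖Cᵀ ^ t‖ * ‖S‖ * ‖C ^ t‖) := by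
        rw [norm_smul, Real.norm_of_nonneg (by positivity)]
        gcongr
        exact (l2_opNorm_mul _ _).trans (by gcongr; exact l2_opNorm_mul _ _)
    _ = ‖S‖ * (γ ^ t * ‖C ^ t‖ ^ 2) := by
        rw [← transpose_pow, l2_opNorm_transpose]
        ring
    _ ≤ ‖S‖ * c ^ 2 * (r ^ 2) ^ t := by
        rw [mul_assoc]
        exact mul_le_mul_of_nonneg_left (hdecay t) (norm_nonneg S)

theorem Mmat_eq_lyapunovSum {dx du : ℕ} (γ : ℝ) (A : Matrix (Fin dx) (Fin dx) ℝ)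
    (B : Matrix (Fin dx) (Fin du) ℝ) (Q : Matrix (Fin dx) (Fin dx) ℝ)
    (R : Matrix (Fin du) (Fin du) ℝ) (θ : Matrix (Fin du) (Fin dx) ℝ) :
    Mmat γ A B Q R θ = lyapunovSum γ (Cl A B θ) (Q + θᵀ * R * θ) :=
  rfl

theorem transpose_Mmat {dx du : ℕ} (γ : ℝ) (A : Matrix (Fin dx) (Fin dx) ℝ)
    (B : Matrix (Fin dx) (Fin du) ℝ) {Q : Matrix (Fin dx) (Fin dx) ℝ}
    {R : Matrix (Fin du) (Fin du) ℝ} (hQ : Qᵀ = Q) (hR : Rᵀ = R)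
    (θ : Matrix (Fin du) (Fin dx) ℝ) :
    (Mmat γ A B Q R θ)ᵀ = Mmat γ A B Q R θ := by
  rw [Mmat_eq_lyapunovSum, transpose_lyapunovSum, transpose_add, transpose_mul, transpose_mul,
    hQ, hR, transpose_transpose, Matrix.mul_assoc]

theorem Mmat_eq_add {dx du : ℕ} {γ : ℝ} (hγ : 0 < γ) (A : Matrix (Fin dx) (Fin dx) ℝ)
    (B : Matrix (Fin dx) (Fin du) ℝ) (Q : Matrix (Fin dx) (Fin dx) ℝ)
    (R : Matrix (Fin du) (Fin du) ℝ) {θ : Matrix (Fin du) (Fin dx) ℝ}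
    (hθ : IsStable γ (Cl A B θ)) :
    Mmat γ A B Q R θ = Q + θᵀ * R * θ + γ • ((Cl A B θ)ᵀ * Mmat γ A B Q R θ * Cl A B θ) :=
  lyapunovSum_eq_add (hθ.summable_lyapunov hγ _)

theorem sub_eq_of_lyapunov {m n : Type*} [Fintype m] [Fintype n] (γ : ℝ)
    (A Q M M' : Matrix m m ℝ) (B : Matrix m n ℝ) {R : Matrix n n ℝ} (θ θ' : Matrix n m ℝ)
    (hR : Rᵀ = R) (hM'symm : M'ᵀ = M')
    (hM : M = Q + θᵀ * R * θ + γ • ((A - B * θ)ᵀ * M * (A - B * θ)))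
    (hM' : M' = Q + θ'ᵀ * R * θ' + γ • ((A - B * θ')ᵀ * M' * (A - B * θ'))) :
    M - M' = (θ - θ')ᵀ * ((R + γ • (Bᵀ * M' * B)) * θ' - γ • (Bᵀ * M' * A))
        + ((R + γ • (Bᵀ * M' * B)) * θ' - γ • (Bᵀ * M' * A))ᵀ * (θ - θ')
        + (θ - θ')ᵀ * (R + γ • (Bᵀ * M' * B)) * (θ - θ')
        + γ • ((A - B * θ)ᵀ * (M - M') * (A - B * θ)) := by
  conv_lhs => rw [hM, hM']
  simp only [transpose_sub, transpose_add, transpose_mul, transpose_smul, transpose_transpose,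
    hR, hM'symm]
  simp only [Matrix.sub_mul, Matrix.mul_sub, Matrix.add_mul, Matrix.mul_add, Matrix.smul_mul,
    Matrix.mul_smul, smul_sub, Matrix.mul_assoc]
  module

/-- One-step cost-difference identity: for stable gains `θ, θ′` with
`Δ = θ − θ′`,
`M(θ) − M(θ′) = Δᵀ E_{θ′} + E_{θ′}ᵀ Δ + Δᵀ (R + γ Bᵀ M(θ′) B) Δ + γ C_θᵀ (M(θ) − M(θ′)) C_θ`. -/
theorem cost_difference_identity
    {dx du : ℕ} (γ : ℝ) (hγ : γ ∈ Set.Ioo (0:ℝ) 1)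
    (A : Matrix (Fin dx) (Fin dx) ℝ) (B : Matrix (Fin dx) (Fin du) ℝ)
    (Q : Matrix (Fin dx) (Fin dx) ℝ) (R : Matrix (Fin du) (Fin du) ℝ)
    (hQ : Qᵀ = Q) (hR : Rᵀ = R)
    (θ θ' : Matrix (Fin du) (Fin dx) ℝ)
    (hθ : IsStable γ (Cl A B θ)) (hθ' : IsStable γ (Cl A B θ')) :
    Mmat γ A B Q R θ - Mmat γ A B Q R θ'
      = (θ - θ')ᵀ * Emat γ A B Q R θ' + (Emat γ A B Q R θ')ᵀ * (θ - θ')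
        + (θ - θ')ᵀ * (R + γ • (Bᵀ * Mmat γ A B Q R θ' * B)) * (θ - θ')
        + γ • ((Cl A B θ)ᵀ * (Mmat γ A B Q R θ - Mmat γ A B Q R θ') * Cl A B θ) :=
  sub_eq_of_lyapunov γ A Q _ _ B θ θ' hR (transpose_Mmat γ A B hQ hR θ')
    (Mmat_eq_add hγ.1 A B Q R hθ) (Mmat_eq_add hγ.1 A B Q R hθ')
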